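/- arXiv:2401.04310 — 3 statements merged into one kernel-verified Lean document; each statement's English description precedes it below -/
import Mathlib

section
/- Let (A_n) be a sequence of 2×2 complex matrices with det A_n = 1 for all n, and suppose that the operator norms ‖A_n‖ (with respect to the Hermitian norm on ℂ²) tend to infinity. Then there exist a strictly increasing sequence of indices (n_k) and a nonzero vector b ∈ ℂ² such that for all nonzero vectors x₁, x₂ ∈ ℂ², neither of which is a complex scalar multiple of b, the projective distance between A_{n_k}x₁ and A_{n_k}x₂ tends to 0; equivalently, |⟨A_{n_k}x₁, A_{n_k}x₂⟩| / (‖A_{n_k}x₁‖ · ‖A_{n_k}x₂‖) → 1 as k → ∞. -/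
/-
Rescale `A n` to operator norm one and pass to a convergent subsequence; the limit `S` still has
norm one, but its determinant is `lim ‖A n‖⁻² = 0`, so its kernel is a line `ℂ b`. For `x ∉ ℂ b`,
`‖A n x‖ = ‖A n‖ ‖(‖A n‖⁻¹ A n) x‖ ≈ ‖A n‖ ‖S x‖ → ∞`. Finally, the Lagrange identity
`|det(u, w)|² + |⟨u, w⟩|² = ‖u‖² ‖w‖²` together with `det(A x₁, A x₂) = det(x₁, x₂)` gives
`1 - (|⟨A x₁, A x₂⟩| / ‖A x₁‖ ‖A x₂‖)² = |det(x₁, x₂)|² / (‖A x₁‖ ‖A x₂‖)² → 0`.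
-/

open Filter Topology

/-- The continuous linear map on `ℂ²` (with the Hermitian norm) induced by a 2×2 complex
matrix; its norm `‖matCLM A‖` is the operator norm of `A`. -/
noncomputable def matCLM (A : Matrix (Fin 2) (Fin 2) ℂ) :
    EuclideanSpace ℂ (Fin 2) →L[ℂ] EuclideanSpace ℂ (Fin 2) :=
  Matrix.toEuclideanCLM (𝕜 := ℂ) A

theorem exists_subseq_tendsto_inv_norm_smul {𝕜 V : Type*} [RCLike 𝕜] [NormedAddCommGroup V]
    [NormedSpace 𝕜 V] [ProperSpace V] (v : ℕ → V) (hv : ∀ n, v n ≠ 0) :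
    ∃ s : V, ‖s‖ = 1 ∧ ∃ φ : ℕ → ℕ, StrictMono φ ∧
      Tendsto (fun k => (‖v (φ k)‖ : 𝕜)⁻¹ • v (φ k)) atTop (𝓝 s) := by
  have hmem : ∀ n, (‖v n‖ : 𝕜)⁻¹ • v n ∈ Metric.sphere (0 : V) 1 := fun n => by
    simp [norm_smul, hv n]
  obtain ⟨s, hs, φ, hφ, hlim⟩ := (isCompact_sphere (0 : V) 1).tendsto_subseq hmem
  exact ⟨s, mem_sphere_zero_iff_norm.mp hs, φ, hφ, hlim⟩

theorem tendsto_norm_apply_atTop_of_tendsto_inv_norm_smul {𝕜 E F : Type*} [RCLike 𝕜]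
    [NormedAddCommGroup E] [NormedSpace 𝕜 E] [NormedAddCommGroup F] [NormedSpace 𝕜 F]
    {T : ℕ → E →L[𝕜] F} {S : E →L[𝕜] F} (hnorm : Tendsto (fun n => ‖T n‖) atTop atTop)
    (hS : Tendsto (fun n => (‖T n‖ : 𝕜)⁻¹ • T n) atTop (𝓝 S)) {x : E} (hx : S x ≠ 0) :
    Tendsto (fun n => ‖T n x‖) atTop atTop := by
  have happ : Tendsto (fun n => ‖((‖T n‖ : 𝕜)⁻¹ • T n) x‖) atTop (𝓝 ‖S x‖) :=
    ((ContinuousLinearMap.apply 𝕜 F x).continuous.tendsto S |>.comp hS).norm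
  refine (hnorm.atTop_mul_pos (norm_pos_iff.mpr hx) happ).congr' ?_
  filter_upwards [hnorm.eventually_gt_atTop 0] with n hn
  simp [norm_smul, hn.ne']

section FiniteDimensional

variable {𝕜 E : Type*} [RCLike 𝕜] [NormedAddCommGroup E] [NormedSpace 𝕜 E]
  [FiniteDimensional 𝕜 E]

theorem det_eq_zero_of_tendsto_inv_norm_smul {T : ℕ → E →L[𝕜] E} {S : E →L[𝕜] E}
    (hpos : 0 < Module.finrank 𝕜 E) (hdet : ∀ n, (T n).det = 1)
    (hnorm : Tendsto (fun n => ‖T n‖) atTop atTop)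
    (hS : Tendsto (fun n => (‖T n‖ : 𝕜)⁻¹ • T n) atTop (𝓝 S)) : S.det = 0 := by
  have hdet_smul : ∀ n, ((‖T n‖ : 𝕜)⁻¹ • T n).det = (‖T n‖ : 𝕜)⁻¹ ^ Module.finrank 𝕜 E := by
    intro n
    simp [ContinuousLinearMap.det, LinearMap.det_smul, hdet n]
  have hpow : Tendsto (fun n => (‖T n‖ : 𝕜)⁻¹ ^ Module.finrank 𝕜 E) atTop (𝓝 0) := by
    have : Tendsto (fun n => ((‖T n‖⁻¹ : ℝ) : 𝕜)) atTop (𝓝 ((0 : ℝ) : 𝕜)) :=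
      (RCLike.continuous_ofReal.tendsto 0).comp hnorm.inv_tendsto_atTop
    simpa [zero_pow hpos.ne'] using this.pow (Module.finrank 𝕜 E)
  refine tendsto_nhds_unique ((ContinuousLinearMap.continuous_det.tendsto S).comp hS) ?_
  simpa [Function.comp_def, hdet_smul] using hpow

theorem exists_ne_zero_forall_apply_ne_zero_of_det_eq_zero (h2 : Module.finrank 𝕜 E = 2)
    {S : E →L[𝕜] E} (hS : S ≠ 0) (hdet : S.det = 0) :
    ∃ b : E, b ≠ 0 ∧ ∀ x : E, (∀ c : 𝕜, x ≠ c • b) → S x ≠ 0 := by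
  set K := LinearMap.ker (S : E →ₗ[𝕜] E)
  have hlt : Module.finrank 𝕜 K < 2 :=
    h2 ▸ Submodule.finrank_lt fun htop =>
      hS (ContinuousLinearMap.coe_injective (LinearMap.ker_eq_top.mp htop))
  have hpos : 1 ≤ Module.finrank 𝕜 K :=
    Submodule.one_le_finrank_iff.mpr (LinearMap.det_eq_zero_iff_ker_ne_bot.mp hdet)
  obtain ⟨b, hb, hspan⟩ := finrank_eq_one_iff'.mp (by omega : Module.finrank 𝕜 K = 1)
  refine ⟨b, by simpa using hb, fun x hx hSx => ?_⟩
  obtain ⟨c, hc⟩ := hspan ⟨x, hSx⟩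
  exact hx c (congrArg Subtype.val hc).symm

theorem exists_subseq_tendsto_norm_apply_atTop (h2 : Module.finrank 𝕜 E = 2)
    {T : ℕ → E →L[𝕜] E} (hdet : ∀ n, (T n).det = 1)
    (hnorm : Tendsto (fun n => ‖T n‖) atTop atTop) :
    ∃ φ : ℕ → ℕ, StrictMono φ ∧ ∃ b : E, b ≠ 0 ∧
      ∀ x : E, (∀ c : 𝕜, x ≠ c • b) → Tendsto (fun k => ‖T (φ k) x‖) atTop atTop := by
  have hT : ∀ n, T n ≠ 0 := fun n h => by
    simpa [h, ContinuousLinearMap.det, h2] using hdet n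
  have := FiniteDimensional.proper_rclike 𝕜 (E →L[𝕜] E)
  obtain ⟨S, hS1, φ, hφ, hlim⟩ := exists_subseq_tendsto_inv_norm_smul (𝕜 := 𝕜) T hT
  have hnormφ := hnorm.comp hφ.tendsto_atTop
  have hdetS : S.det = 0 :=
    det_eq_zero_of_tendsto_inv_norm_smul (by omega) (fun k => hdet (φ k)) hnormφ hlim
  obtain ⟨b, hb, hker⟩ := exists_ne_zero_forall_apply_ne_zero_of_det_eq_zero h2
    (norm_ne_zero_iff.mp (hS1 ▸ one_ne_zero)) hdetS
  exact ⟨φ, hφ, b, hb, fun x hx =>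
    tendsto_norm_apply_atTop_of_tendsto_inv_norm_smul hnormφ hlim (hker x hx)⟩

end FiniteDimensional

theorem Matrix.det_toEuclideanCLM {𝕜 n : Type*} [RCLike 𝕜] [Fintype n] [DecidableEq n]
    (A : Matrix n n 𝕜) :
    (Matrix.toEuclideanCLM (𝕜 := 𝕜) A).det = A.det := by
  rw [ContinuousLinearMap.det, Matrix.coe_toEuclideanCLM_eq_toEuclideanLin,
    Matrix.toEuclideanLin_eq_toLin_orthonormal, LinearMap.det_toLin]

section EuclideanPlane

variable {𝕜 : Type*} [RCLike 𝕜]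

def det2 (u w : EuclideanSpace 𝕜 (Fin 2)) : 𝕜 := u 0 * w 1 - u 1 * w 0

theorem det2_toEuclideanCLM (A : Matrix (Fin 2) (Fin 2) 𝕜) (x y : EuclideanSpace 𝕜 (Fin 2)) :
    det2 (Matrix.toEuclideanCLM (𝕜 := 𝕜) A x) (Matrix.toEuclideanCLM (𝕜 := 𝕜) A y) =
      A.det * det2 x y := by
  simp only [det2, Matrix.ofLp_toEuclideanCLM, Matrix.mulVec, dotProduct, Fin.sum_univ_two,
    Matrix.det_fin_two]
  ring

theorem norm_det2_sq_add_norm_inner_sq (u w : EuclideanSpace 𝕜 (Fin 2)) :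
    ‖det2 u w‖ ^ 2 + ‖(inner 𝕜 u w : 𝕜)‖ ^ 2 = ‖u‖ ^ 2 * ‖w‖ ^ 2 := by
  apply RCLike.ofReal_injective (K := 𝕜)
  simp only [EuclideanSpace.norm_sq_eq, Fin.sum_univ_two, RCLike.ofReal_pow, ← RCLike.conj_mul,
    det2, PiLp.inner_apply, RCLike.inner_apply, map_sub, map_mul, map_add, RCLike.conj_conj]
  ring

theorem tendsto_norm_inner_div_norm_mul_norm {α : Type*} {l : Filter α}
    {u w : α → EuclideanSpace 𝕜 (Fin 2)} {d : 𝕜} (hd : ∀ k, det2 (u k) (w k) = d)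
    (hu : Tendsto (fun k => ‖u k‖) l atTop) (hw : Tendsto (fun k => ‖w k‖) l atTop) :
    Tendsto (fun k => ‖(inner 𝕜 (u k) (w k) : 𝕜)‖ / (‖u k‖ * ‖w k‖)) l (𝓝 1) := by
  have hN : Tendsto (fun k => ‖u k‖ * ‖w k‖) l atTop := hu.atTop_mul_atTop₀ hw
  have hlower : Tendsto (fun k => 1 - ‖d‖ ^ 2 / (‖u k‖ * ‖w k‖) ^ 2) l (𝓝 1) := by
    simpa using tendsto_const_nhds.sub
      (tendsto_const_nhds.div_atTop (hN.atTop_mul_atTop₀ hN |>.congr fun k => (sq _).symm))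
  refine tendsto_of_tendsto_of_tendsto_of_le_of_le' hlower tendsto_const_nhds ?_
    (Eventually.of_forall fun k => div_le_one_of_le₀ (norm_inner_le_norm _ _) (by positivity))
  filter_upwards [hN.eventually_gt_atTop 0] with k hk
  have hle : ‖(inner 𝕜 (u k) (w k) : 𝕜)‖ / (‖u k‖ * ‖w k‖) ≤ 1 :=
    div_le_one_of_le₀ (norm_inner_le_norm _ _) hk.le
  have hsq : (‖(inner 𝕜 (u k) (w k) : 𝕜)‖ / (‖u k‖ * ‖w k‖)) ^ 2
      = 1 - ‖d‖ ^ 2 / (‖u k‖ * ‖w k‖) ^ 2 := by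
    rw [← hd k, div_pow, eq_sub_iff_add_eq, ← add_div, add_comm, norm_det2_sq_add_norm_inner_sq,
      ← mul_pow, div_self (pow_ne_zero 2 hk.ne')]
  -- `0 ≤ r ≤ 1` gives `1 - ‖d‖² / N² = r² ≤ r`
  nlinarith [hle, hsq, div_nonneg (norm_nonneg (inner 𝕜 (u k) (w k) : 𝕜)) hk.le]

end EuclideanPlane

theorem stmt0 (A : ℕ → Matrix (Fin 2) (Fin 2) ℂ)
    (hdet : ∀ n, (A n).det = 1)
    (hnorm : Tendsto (fun n => ‖matCLM (A n)‖) atTop atTop) :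
    ∃ nk : ℕ → ℕ, StrictMono nk ∧
      ∃ b : EuclideanSpace ℂ (Fin 2), b ≠ 0 ∧
        ∀ x₁ x₂ : EuclideanSpace ℂ (Fin 2), x₁ ≠ 0 → x₂ ≠ 0 →
          (∀ c : ℂ, x₁ ≠ c • b) → (∀ c : ℂ, x₂ ≠ c • b) →
          Tendsto (fun k =>
              ‖(inner ℂ (matCLM (A (nk k)) x₁) (matCLM (A (nk k)) x₂) : ℂ)‖ /
                (‖matCLM (A (nk k)) x₁‖ * ‖matCLM (A (nk k)) x₂‖))
            atTop (𝓝 1) := by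
  obtain ⟨φ, hφ, b, hb, hgrow⟩ := exists_subseq_tendsto_norm_apply_atTop
    finrank_euclideanSpace_fin (fun n => (Matrix.det_toEuclideanCLM (A n)).trans (hdet n)) hnorm
  refine ⟨φ, hφ, b, hb, fun x₁ x₂ _ _ h₁ h₂ => ?_⟩
  refine tendsto_norm_inner_div_norm_mul_norm (d := det2 x₁ x₂) (fun k => ?_)
    (hgrow x₁ h₁) (hgrow x₂ h₂)
  rw [matCLM, det2_toEuclideanCLM, hdet, one_mul]
end

section
/- Let (X, μ) be a finite measure space, let T : X → X be a measure-preserving transformation, and let (K_n)_{n ≥ 1} be a sequence of measurable subsets of X with ∑_{n=1}^{∞} μ(X \ K_n) < ∞. Then there is a measurable subset Ω ⊆ X with μ(X \ Ω) = 0 having the property that for any x, y ∈ Ω there exist n ∈ ℕ and a strictly increasing sequence (n_k) of natural numbers such that T^{n_k}(x) ∈ K_n and T^{n_k}(y) ∈ K_n for every k. -/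
/-!
Call a point bad for `n` if some initial stretch of its orbit spends more than a third of its
time outside `K n`. By the maximal ergodic theorem the bad set for `n` has measure at most
`3 μ (K n)ᶜ`, so by Borel–Cantelli almost every point is bad for only finitely many `n`. If
neither `x` nor `y` is bad for `n`, then among the first `M` times at most `2M/3` see `x` or `y`
outside `K n`, so the common visits of `x` and `y` to `K n` number at least `M/3`, and hence are
infinite.
-/

open MeasureTheory Filter Finset

noncomputable def birkhoffMax {α : Type*} (f : α → α) (g : α → ℝ) (n : ℕ) : α → ℝ :=
  (range (n + 1)).sup' nonempty_range_add_one (birkhoffSum f g ·)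

section BirkhoffMax

variable {α : Type*} (f : α → α) (g : α → ℝ)

lemma birkhoffMax_apply (n : ℕ) (x : α) :
    birkhoffMax f g n x = (range (n + 1)).sup' nonempty_range_add_one (birkhoffSum f g · x) :=
  Finset.sup'_apply _ _ _

lemma birkhoffSum_le_birkhoffMax {k n : ℕ} (hk : k ≤ n) (x : α) :
    birkhoffSum f g k x ≤ birkhoffMax f g n x := by
  rw [birkhoffMax_apply]
  exact le_sup' (birkhoffSum f g · x) (mem_range_succ_iff.2 hk)

lemma birkhoffMax_nonneg (n : ℕ) (x : α) : 0 ≤ birkhoffMax f g n x := by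
  simpa using birkhoffSum_le_birkhoffMax f g (Nat.zero_le n) x

lemma monotone_birkhoffMax : Monotone (birkhoffMax f g) := fun _ _ hmn x => by
  rw [birkhoffMax_apply]
  exact sup'_le _ _ fun k hk =>
    birkhoffSum_le_birkhoffMax f g ((mem_range_succ_iff.1 hk).trans hmn) x

lemma exists_birkhoffSum_eq_birkhoffMax (n : ℕ) (x : α) :
    ∃ k ≤ n, birkhoffSum f g k x = birkhoffMax f g n x := by
  obtain ⟨k, hk, h⟩ := exists_mem_eq_sup' nonempty_range_add_one (birkhoffSum f g · x)
  exact ⟨k, mem_range_succ_iff.1 hk, by rw [birkhoffMax_apply, h]⟩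

lemma birkhoffMax_le_max_zero (n : ℕ) (x : α) :
    birkhoffMax f g n x ≤ max 0 (g x + birkhoffMax f g n (f x)) := by
  rw [birkhoffMax_apply]
  refine sup'_le _ _ fun k hk => ?_
  rcases k with _ | k
  · simp
  · rw [birkhoffSum_succ']
    refine le_max_of_le_right (add_le_add_right ?_ _)
    exact birkhoffSum_le_birkhoffMax f g ((Nat.le_succ k).trans (mem_range_succ_iff.1 hk)) (f x)

lemma setOf_exists_birkhoffSum_pos :
    {x | ∃ n, 0 < birkhoffSum f g n x} = ⋃ n, {x | 0 < birkhoffMax f g n x} := by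
  ext x
  simp only [Set.mem_iUnion]
  constructor
  · rintro ⟨n, hn⟩
    exact ⟨n, hn.trans_le (birkhoffSum_le_birkhoffMax f g le_rfl x)⟩
  · rintro ⟨n, hn⟩
    obtain ⟨k, -, hk⟩ := exists_birkhoffSum_eq_birkhoffMax f g n x
    exact ⟨k, hk ▸ hn⟩

lemma birkhoffSum_indicator_one {R : Type*} [AddCommMonoidWithOne R] (s : Set α)
    [DecidablePred (· ∈ s)] (n : ℕ) (x : α) :
    birkhoffSum f (s.indicator 1) n x = (#{k ∈ range n | f^[k] x ∈ s} : R) := by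
  simp only [birkhoffSum, Set.indicator_apply, Pi.one_apply]
  exact sum_boole _ _

variable [MeasurableSpace α] {μ : Measure α} {f g}

lemma measurable_birkhoffMax (hf : Measurable f) (hg : Measurable g) (n : ℕ) :
    Measurable (birkhoffMax f g n) :=
  measurable_range_sup' fun _ _ => Finset.measurable_sum _ fun i _ => hg.comp (hf.iterate i)

lemma integrable_birkhoffMax (hf : MeasurePreserving f μ μ) (hg : Integrable g μ) (n : ℕ) :
    Integrable (birkhoffMax f g n) μ :=
  sup'_induction _ _ (p := (Integrable · μ)) (fun _ h₁ _ h₂ => h₁.sup h₂) fun _ _ =>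
    integrable_finsetSum _ fun i _ => (hf.iterate i).integrable_comp_of_integrable hg

/-- The maximal ergodic theorem, by Garsia's argument: on `E = {Φ > 0}` we have
`Φ - Φ ∘ f ≤ g`, while `∫_E Φ = ∫ Φ = ∫ Φ ∘ f ≥ ∫_E Φ ∘ f`. -/
theorem setIntegral_birkhoffMax_pos_nonneg (hf : MeasurePreserving f μ μ) (hgm : Measurable g)
    (hg : Integrable g μ) (n : ℕ) :
    0 ≤ ∫ x in {x | 0 < birkhoffMax f g n x}, g x ∂μ := by
  set Φ := birkhoffMax f g n
  set E := {x | 0 < Φ x}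
  have hΦ : Integrable Φ μ := integrable_birkhoffMax hf hg n
  have hΦf : Integrable (Φ ∘ f) μ := hf.integrable_comp_of_integrable hΦ
  have hE : MeasurableSet E :=
    measurableSet_lt measurable_const (measurable_birkhoffMax hf.measurable hgm n)
  have hΦE : ∫ x in E, Φ x ∂μ = ∫ x, Φ x ∂μ :=
    setIntegral_eq_integral_of_forall_compl_eq_zero fun x hx =>
      le_antisymm (not_lt.1 hx) (birkhoffMax_nonneg f g n x)
  have hΦ_comp : ∫ x, Φ (f x) ∂μ = ∫ x, Φ x ∂μ := by
    rw [← integral_map hf.aemeasurable (by rw [hf.map_eq]; exact hΦ.aestronglyMeasurable),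
      hf.map_eq]
  calc 0 = ∫ x, Φ x ∂μ - ∫ x, Φ (f x) ∂μ := by rw [hΦ_comp, sub_self]
    _ ≤ ∫ x in E, Φ x ∂μ - ∫ x in E, Φ (f x) ∂μ := by
      rw [hΦE]
      exact sub_le_sub_left (setIntegral_le_integral hΦf
        (Eventually.of_forall fun x => birkhoffMax_nonneg f g n (f x))) _
    _ = ∫ x in E, (Φ x - Φ (f x)) ∂μ := (integral_sub hΦ.integrableOn hΦf.integrableOn).symm
    _ ≤ ∫ x in E, g x ∂μ := by
      refine setIntegral_mono_on (hΦ.sub hΦf).integrableOn hg.integrableOn hE fun x hx => ?_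
      have hx' : Φ x ≤ g x + Φ (f x) :=
        (le_max_iff.1 (birkhoffMax_le_max_zero f g n x)).resolve_left (not_le.2 hx)
      linarith

lemma measure_birkhoffMax_indicator_pos_le [IsFiniteMeasure μ] (hf : MeasurePreserving f μ μ)
    {s : Set α} (hs : MeasurableSet s) (c : ℕ) (n : ℕ) :
    μ {x | 0 < birkhoffMax f (fun y => c * s.indicator 1 y - 1) n x} ≤ c * μ s := by
  set g : α → ℝ := fun y => c * s.indicator 1 y - 1
  set E := {x | 0 < birkhoffMax f g n x}
  have hind : Integrable (s.indicator (1 : α → ℝ)) μ := (integrable_const (1 : ℝ)).indicator hs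
  have hgm : Measurable g := (measurable_const.indicator hs).const_mul _ |>.sub_const _
  have hg : Integrable g μ := (hind.const_mul _).sub (integrable_const _)
  have hint : ∫ x in E, g x ∂μ = c * μ.real (E ∩ s) - μ.real E := by
    rw [integral_sub (hind.const_mul _).integrableOn (integrable_const _).integrableOn,
      integral_const_mul, setIntegral_indicator hs]
    simp
  have hreal : μ.real E ≤ c * μ.real s := by
    have hpos := setIntegral_birkhoffMax_pos_nonneg hf hgm hg n
    have hmono := measureReal_mono (μ := μ) (Set.inter_subset_right : E ∩ s ⊆ s)
    rw [hint] at hpos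
    nlinarith
  refine (ENNReal.toReal_le_toReal (measure_ne_top _ _) (by finiteness)).1 ?_
  simpa [ENNReal.toReal_mul, measureReal_def] using hreal

theorem measure_setOf_exists_lt_mul_card_le [IsFiniteMeasure μ] (hf : MeasurePreserving f μ μ)
    {s : Set α} (hs : MeasurableSet s) [DecidablePred (· ∈ s)] (c : ℕ) :
    μ {x | ∃ n, n < c * #{k ∈ range n | f^[k] x ∈ s}} ≤ c * μ s := by
  set g : α → ℝ := fun y => c * s.indicator 1 y - 1
  have hsum : ∀ n x, birkhoffSum f g n x = c * #{k ∈ range n | f^[k] x ∈ s} - n := by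
    intro n x
    simp only [g, birkhoffSum, sum_sub_distrib, ← mul_sum, sum_const, card_range, nsmul_one]
    rw [← birkhoffSum_indicator_one f s n x]
    rfl
  have hset : {x | ∃ n, n < c * #{k ∈ range n | f^[k] x ∈ s}} =
      {x | ∃ n, 0 < birkhoffSum f g n x} := by
    ext x
    simp only [Set.mem_ofPred, hsum, sub_pos]
    exact exists_congr fun n => by exact_mod_cast Iff.rfl
  have hmono : Monotone fun n => {x | 0 < birkhoffMax f g n x} := fun m n hmn x hx =>
    hx.trans_le (monotone_birkhoffMax f g hmn x)
  rw [hset, setOf_exists_birkhoffSum_pos, hmono.measure_iUnion]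
  exact iSup_le (measure_birkhoffMax_indicator_pos_le hf hs c)

end BirkhoffMax

lemma infinite_inter_of_three_mul_card_notMem_le {s t : Set ℕ} [DecidablePred (· ∈ s)]
    [DecidablePred (· ∈ t)] (hs : ∀ n, 3 * #{k ∈ range n | k ∉ s} ≤ n)
    (ht : ∀ n, 3 * #{k ∈ range n | k ∉ t} ≤ n) : (s ∩ t).Infinite := by
  have hcount : ∀ n, n ≤ 3 * #{k ∈ range n | k ∈ s ∩ t} := by
    intro n
    have hsplit := card_filter_add_card_filter_not (s := range n) (· ∈ s ∩ t)
    have hmiss : #{k ∈ range n | k ∉ s ∩ t} ≤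
        #{k ∈ range n | k ∉ s} + #{k ∈ range n | k ∉ t} := by
      refine (card_le_card fun k hk => ?_).trans (card_union_le _ _)
      simp only [mem_union, mem_filter, Set.mem_inter_iff] at hk ⊢
      tauto
    have := hs n
    have := ht n
    rw [card_range] at hsplit
    omega
  intro hfin
  have hle : #{k ∈ range (3 * #hfin.toFinset + 1) | k ∈ s ∩ t} ≤ #hfin.toFinset :=
    card_le_card fun k hk => hfin.mem_toFinset.2 (mem_filter.1 hk).2
  have := hcount (3 * #hfin.toFinset + 1)
  omega

theorem stmt5 {X : Type*} [MeasurableSpace X] (μ : Measure X) [IsFiniteMeasure μ]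
    (T : X → X) (hT : MeasurePreserving T μ μ)
    (K : ℕ → Set X) (hK : ∀ n, MeasurableSet (K n))
    (hsum : ∑' n : ℕ, μ ((K n)ᶜ) < ⊤) :
    ∃ Ω : Set X, MeasurableSet Ω ∧ μ Ωᶜ = 0 ∧
      ∀ x ∈ Ω, ∀ y ∈ Ω, ∃ n : ℕ, ∃ nk : ℕ → ℕ, StrictMono nk ∧
        ∀ k, T^[nk k] x ∈ K n ∧ T^[nk k] y ∈ K n := by
  classical
  set Bad : ℕ → Set X := fun n => {x | ∃ M, M < 3 * #{m ∈ range M | T^[m] x ∈ (K n)ᶜ}}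
  have hBad : ∑' n, μ (Bad n) ≠ ⊤ := by
    refine ne_top_of_le_ne_top ?_ (ENNReal.tsum_le_tsum fun n =>
      measure_setOf_exists_lt_mul_card_le hT (hK n).compl 3)
    rw [ENNReal.tsum_mul_left]
    exact ENNReal.mul_ne_top (by norm_num) hsum.ne
  have hnull : μ (limsup Bad atTop) = 0 := measure_limsup_atTop_eq_zero hBad
  refine ⟨(toMeasurable μ (limsup Bad atTop))ᶜ, (measurableSet_toMeasurable _ _).compl,
    by rwa [compl_compl, measure_toMeasurable], fun x hx y hy => ?_⟩
  have hgood : ∀ z ∈ (toMeasurable μ (limsup Bad atTop))ᶜ, ∀ᶠ n in atTop, z ∉ Bad n :=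
    fun z hz => by
      simpa [mem_limsup_iff_frequently_mem] using fun h => hz (subset_toMeasurable _ _ h)
  obtain ⟨n, hxn, hyn⟩ := ((hgood x hx).and (hgood y hy)).exists
  have hinf : ({m | T^[m] x ∈ K n} ∩ {m | T^[m] y ∈ K n}).Infinite :=
    infinite_inter_of_three_mul_card_notMem_le (by simpa [Bad] using hxn)
      (by simpa [Bad] using hyn)
  exact ⟨n, Nat.nth (· ∈ {m | T^[m] x ∈ K n} ∩ {m | T^[m] y ∈ K n}), Nat.nth_strictMono hinf,
    fun k => Nat.nth_mem_of_infinite hinf k⟩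
end

section
/- Let 𝔤 be a real Lie algebra admitting a basis e₁, …, e₆ whose only nonvanishing Lie brackets among basis vectors are [e₁, e₂] = e₅ = −[e₂, e₁] and [e₃, e₄] = e₅ = −[e₄, e₃] (all other brackets of basis vectors vanish). Let J : 𝔤 → 𝔤 be the linear endomorphism determined by J e₁ = e₂, J e₂ = −e₁, J e₃ = e₄, J e₄ = −e₃, J e₅ = e₆, J e₆ = −e₅. Then J ∘ J = −id, and the Nijenhuis tensor N_J(X, Y) := [X, Y] + J[JX, Y] + J[X, JY] − [JX, JY] vanishes for all X, Y ∈ 𝔤. -/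
namespace LieAlgebra

variable {R L : Type*} [CommRing R] [LieRing L] [LieAlgebra R L]

def nijenhuis (J : L →ₗ[R] L) : L →ₗ[R] L →ₗ[R] L :=
  LinearMap.mk₂ R (fun X Y => ⁅X, Y⁆ + J ⁅J X, Y⁆ + J ⁅X, J Y⁆ - ⁅J X, J Y⁆)
    (fun X X' Y => by simp only [map_add, add_lie]; abel)
    (fun c X Y => by simp only [map_smul, smul_lie, smul_add, smul_sub])
    (fun X Y Y' => by simp only [map_add, lie_add]; abel)
    (fun c X Y => by simp only [map_smul, lie_smul, smul_add, smul_sub])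

@[simp]
theorem nijenhuis_apply (J : L →ₗ[R] L) (X Y : L) :
    nijenhuis J X Y = ⁅X, Y⁆ + J ⁅J X, Y⁆ + J ⁅X, J Y⁆ - ⁅J X, J Y⁆ :=
  rfl

theorem nijenhuis_eq_zero_of_basis {ι : Type*} (b : Module.Basis ι R L) (J : L →ₗ[R] L)
    (h : ∀ i j, nijenhuis J (b i) (b j) = 0) : nijenhuis J = 0 :=
  LinearMap.ext_basis b b fun i j => by simpa using h i j

end LieAlgebra

theorem LinearMap.apply_apply_eq_neg_of_basis {R M ι : Type*} [CommRing R] [AddCommGroup M]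
    [Module R M] (b : Module.Basis ι R M) (J : M →ₗ[R] M) (h : ∀ i, J (J (b i)) = -b i)
    (x : M) : J (J x) = -x :=
  LinearMap.congr_fun (b.ext (f₁ := J ∘ₗ J) (f₂ := -LinearMap.id) h) x

open LieAlgebra in
theorem stmt6 {𝔤 : Type*} [LieRing 𝔤] [LieAlgebra ℝ 𝔤]
    (b : Module.Basis (Fin 6) ℝ 𝔤)
    (hbr : ∀ i j : Fin 6, ⁅b i, b j⁆ =
      if (i, j) = ((0 : Fin 6), (1 : Fin 6)) ∨ (i, j) = ((2 : Fin 6), (3 : Fin 6)) then b 4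
      else if (i, j) = ((1 : Fin 6), (0 : Fin 6)) ∨ (i, j) = ((3 : Fin 6), (2 : Fin 6)) then -b 4
      else 0)
    (J : 𝔤 →ₗ[ℝ] 𝔤)
    (hJ0 : J (b 0) = b 1) (hJ1 : J (b 1) = -b 0)
    (hJ2 : J (b 2) = b 3) (hJ3 : J (b 3) = -b 2)
    (hJ4 : J (b 4) = b 5) (hJ5 : J (b 5) = -b 4) :
    (∀ x : 𝔤, J (J x) = -x) ∧
      ∀ X Y : 𝔤, ⁅X, Y⁆ + J ⁅J X, Y⁆ + J ⁅X, J Y⁆ - ⁅J X, J Y⁆ = 0 := by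
  refine ⟨J.apply_apply_eq_neg_of_basis b fun i => ?_, fun X Y => ?_⟩
  · fin_cases i <;> simp [hJ0, hJ1, hJ2, hJ3, hJ4, hJ5]
  · have hN : nijenhuis J = 0 := nijenhuis_eq_zero_of_basis b J fun i j => by
      fin_cases i <;> fin_cases j <;> simp [hbr, hJ0, hJ1, hJ2, hJ3, hJ4, hJ5]
    simpa using LinearMap.congr_fun₂ hN X Y
end
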